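/- Bus topology from the chain graph (Lemma 1): let k ≥ 2 and let G be the chain graph on vertex set V = {o_1,…,o_{k−1}} ∪ {c_1,…,c_k} with edge set E = ⋃_{i=1}^{k−1} {{o_i, c_i}, {o_i, c_{i+1}}}. Then applying, for each i = 1,…,k−1 in order, the operation 'local complementation at o_i followed by deletion of o_i' yields the path graph on {c_1,…,c_k} with edge set exactly {{c_i, c_{i+1}} : 1 ≤ i ≤ k−1}. -/

import Mathlib

/-- Local complementation of `G` at vertex `a`: edges inside the open neighborhood of `a`
are complemented, all other edges are unchanged. -/
def localComp {V : Type*} (G : SimpleGraph V) (a : V) : SimpleGraph V where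
  Adj x y := x ≠ y ∧ ((G.Adj a x ∧ G.Adj a y) ↔ ¬ G.Adj x y)
  symm := ⟨by
    rintro x y ⟨hxy, h⟩
    refine ⟨hxy.symm, ?_⟩
    constructor
    · rintro ⟨h1, h2⟩ hyx
      exact (h.mp ⟨h2, h1⟩) hyx.symm
    · intro hne
      have := h.mpr (fun hxy' => hne hxy'.symm)
      exact ⟨this.2, this.1⟩⟩
  loopless := ⟨fun x h => h.1 rfl⟩

/-- Vertex deletion: remove vertex `a` together with all edges incident to it
(the deleted vertex is kept as an isolated vertex of the ambient type). -/
def deleteVertex {V : Type*} (G : SimpleGraph V) (a : V) : SimpleGraph V where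
  Adj x y := G.Adj x y ∧ x ≠ a ∧ y ≠ a
  symm := ⟨fun _ _ ⟨h, hx, hy⟩ => ⟨h.symm, hy, hx⟩⟩
  loopless := ⟨fun x h => G.loopless.irrefl x h.1⟩

/-- The chain graph on `k-1` orchestrator vertices `Sum.inl i` (representing `o_{i+1}`)
and `k` client vertices `Sum.inr j` (representing `c_{j+1}`): each orchestrator `o_i`
is adjacent exactly to clients `c_i` and `c_{i+1}`. -/
def chain (k : ℕ) : SimpleGraph (Fin (k-1) ⊕ Fin k) :=
  SimpleGraph.fromRel (fun x y => match x, y with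
    | Sum.inl i, Sum.inr j => j.val = i.val ∨ j.val = i.val + 1
    | _, _ => False)

/-!
Measuring `o_m` out of the chain whose first `m` orchestrators are already gone: the only
neighbours of `o_m` are `c_m` and `c_{m+1}`, so local complementation at `o_m` toggles exactly
the pair `c_m c_{m+1}`, which is not yet an edge, and then `o_m` is deleted. Hence each step
extends the path on the clients by one edge, and after `k - 1` steps it is the whole bus.
-/

theorem List.foldl_finRange_eq_of_step {α : Type*} {n : ℕ} (f : α → Fin n → α) (g : ℕ → α)
    (hf : ∀ i : Fin n, f (g i) i = g (i + 1)) :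
    (List.finRange n).foldl f (g 0) = g n := by
  induction n with
  | zero => rfl
  | succ n ih =>
    rw [List.finRange_succ_last, List.foldl_concat, List.foldl_map, ih _ fun i => hf i.castSucc]
    exact hf (Fin.last n)

/-- The graph reached from `chain k` after measuring the orchestrators `o_1, …, o_m`. -/
def chainAfter (k m : ℕ) : SimpleGraph (Fin (k-1) ⊕ Fin k) :=
  SimpleGraph.fromRel fun x y => match x, y with
    | Sum.inl i, Sum.inr j => m ≤ i.val ∧ (j.val = i.val ∨ j.val = i.val + 1)
    | Sum.inr i, Sum.inr j => j.val = i.val + 1 ∧ j.val ≤ m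
    | _, _ => False

theorem chainAfter_zero (k : ℕ) : chainAfter k 0 = chain k := by
  ext x y
  rcases x with i | i <;> rcases y with j | j <;>
    simp [chain, chainAfter, SimpleGraph.fromRel_adj, Fin.ext_iff]
  omega

theorem chainAfter_adj_inl_self {k m : ℕ} (hm : m < k - 1) (z : Fin (k-1) ⊕ Fin k) :
    (chainAfter k m).Adj (Sum.inl ⟨m, hm⟩) z ↔
      z = Sum.inr ⟨m, by omega⟩ ∨ z = Sum.inr ⟨m + 1, by omega⟩ := by
  rcases z with i | j
  · simp [chainAfter]
  · simp [chainAfter, Fin.ext_iff]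

theorem deleteVertex_localComp_chainAfter {k m : ℕ} (hm : m < k - 1) :
    deleteVertex (localComp (chainAfter k m) (Sum.inl ⟨m, hm⟩)) (Sum.inl ⟨m, hm⟩)
      = chainAfter k (m + 1) := by
  ext x y
  simp only [deleteVertex, localComp, chainAfter_adj_inl_self hm]
  rcases x with i | i <;> rcases y with j | j <;>
    simp [chainAfter, Fin.ext_iff] <;> omega

theorem chain_to_bus (k : ℕ) :
    (List.finRange (k - 1)).foldl
        (fun G i => deleteVertex (localComp G (Sum.inl i)) (Sum.inl i)) (chain k)
      =
    SimpleGraph.fromRel (fun x y => match x, y with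
      | Sum.inr i, Sum.inr j => (j : Fin k).val = (i : Fin k).val + 1
      | _, _ => False) := by
  rw [← chainAfter_zero, List.foldl_finRange_eq_of_step _ (chainAfter k)
    fun i => deleteVertex_localComp_chainAfter i.isLt]
  ext x y
  rcases x with i | i <;> rcases y with j | j <;>
    simp [chainAfter, SimpleGraph.fromRel_adj] <;> omega
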